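/- arXiv:2510.21429 — 4 statements merged into one kernel-verified Lean document; each statement's English description precedes it below -/
import Mathlib

section
/- Let $\mathcal{G}_1, \mathcal{G}_2 \subseteq \mathbb{N}^n$ be two grids (axis-aligned integer boxes) that overlap, i.e., $\mathcal{G}_1 \cap \mathcal{G}_2 \neq \emptyset$. Then for any two points $\vec{s}_1, \vec{s}_2 \in \mathcal{G}_1 \cup \mathcal{G}_2$, there exists a shortest chain $\{\vec{r}_0, \dots, \vec{r}_k\}$ from $\vec{s}_1$ to $\vec{s}_2$ with every $\vec{r}_i \in \mathcal{G}_1 \cup \mathcal{G}_2$. -/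
/-- A grid (axis-aligned integer box) in `ℕ^n`. -/
def IsGrid {n : ℕ} (G : Set (Fin n → ℕ)) : Prop :=
  ∃ L U : Fin n → ℕ, (∀ j, L j ≤ U j) ∧ G = {t | ∀ j, L j ≤ t j ∧ t j ≤ U j}

/-- A chain from `s₁` to `s₂` of length `k`: each step changes exactly one
coordinate, by one unit. -/
def IsChainSeq {n : ℕ} (r : ℕ → (Fin n → ℕ)) (k : ℕ) (s₁ s₂ : Fin n → ℕ) : Prop :=
  r 0 = s₁ ∧ r k = s₂ ∧ ∀ i < k, ∃ j : Fin n,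
    (r (i + 1) j = r i j + 1 ∨ r i j = r (i + 1) j + 1) ∧
    ∀ j' ≠ j, r (i + 1) j' = r i j'

lemma nat_dist_def (a b : ℕ) : Nat.dist a b = a - b + (b - a) := rfl

lemma chain_exists_aux {n : ℕ} (k : ℕ) :
    ∀ (s t : Fin n → ℕ), (∑ j, Nat.dist (s j) (t j)) = k →
    ∃ r : ℕ → Fin n → ℕ, IsChainSeq r k s t ∧
      ∀ i ≤ k, ∀ j, min (s j) (t j) ≤ r i j ∧ r i j ≤ max (s j) (t j) := by
  induction k with
  | zero =>
    intro s t hk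
    have hst : s = t := by
      funext j
      exact Nat.eq_of_dist_eq_zero
        ((Finset.sum_eq_zero_iff).1 hk j (Finset.mem_univ j))
    exact ⟨fun _ => s, ⟨rfl, hst, fun i hi => absurd hi (Nat.not_lt_zero i)⟩,
      fun i _ j => by simp⟩
  | succ k ih =>
    intro s t hk
    have hne : ∃ j₀ : Fin n, s j₀ ≠ t j₀ := by
      by_contra h
      push_neg at h
      have : (∑ j, Nat.dist (s j) (t j)) = 0 :=
        Finset.sum_eq_zero fun j _ => by rw [h j]; exact Nat.dist_self _
      omega
    obtain ⟨j₀, hj₀⟩ := hne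
    set v : ℕ := if s j₀ < t j₀ then s j₀ + 1 else s j₀ - 1 with hv
    set s' : Fin n → ℕ := Function.update s j₀ v with hs'
    have hs'j₀ : s' j₀ = v := Function.update_self _ _ _
    have hs'ne : ∀ j ≠ j₀, s' j = s j := fun j hj => Function.update_of_ne hj _ _
    have hdist : Nat.dist (s' j₀) (t j₀) + 1 = Nat.dist (s j₀) (t j₀) := by
      rw [hs'j₀, hv]
      simp only [nat_dist_def]
      split <;> omega
    have hsum : (∑ j, Nat.dist (s' j) (t j)) = k := by
      have e1 : Nat.dist (s j₀) (t j₀)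
          + ∑ j ∈ Finset.univ.erase j₀, Nat.dist (s j) (t j)
          = ∑ j, Nat.dist (s j) (t j) :=
        Finset.add_sum_erase Finset.univ (fun j => Nat.dist (s j) (t j)) (Finset.mem_univ j₀)
      have e2 : Nat.dist (s' j₀) (t j₀)
          + ∑ j ∈ Finset.univ.erase j₀, Nat.dist (s' j) (t j)
          = ∑ j, Nat.dist (s' j) (t j) :=
        Finset.add_sum_erase Finset.univ (fun j => Nat.dist (s' j) (t j)) (Finset.mem_univ j₀)
      have e3 : (∑ j ∈ Finset.univ.erase j₀, Nat.dist (s' j) (t j)) =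
          ∑ j ∈ Finset.univ.erase j₀, Nat.dist (s j) (t j) :=
        Finset.sum_congr rfl fun j hj => by
          rw [hs'ne j (Finset.mem_erase.1 hj).1]
      omega
    obtain ⟨r', hr', hb'⟩ := ih s' t hsum
    refine ⟨fun i => match i with | 0 => s | (i' + 1) => r' i', ⟨rfl, hr'.2.1, ?_⟩, ?_⟩
    · intro i hi
      match i with
      | 0 =>
        refine ⟨j₀, ?_, ?_⟩
        · show r' 0 j₀ = s j₀ + 1 ∨ s j₀ = r' 0 j₀ + 1
          rw [hr'.1, hs'j₀, hv]
          split <;> omega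
        · intro j' hj'
          show r' 0 j' = s j'
          rw [hr'.1]
          exact hs'ne j' hj'
      | (i' + 1) =>
        exact hr'.2.2 i' (by omega)
    · intro i hi j
      match i with
      | 0 =>
        show min (s j) (t j) ≤ s j ∧ s j ≤ max (s j) (t j)
        omega
      | (i' + 1) =>
        have hb := hb' i' (by omega) j
        show min (s j) (t j) ≤ r' i' j ∧ r' i' j ≤ max (s j) (t j)
        rcases eq_or_ne j j₀ with rfl | hj
        · rw [hs'j₀, hv] at hb
          split at hb <;> omega
        · rw [hs'ne j hj] at hb
          omega

lemma chain_exists {n : ℕ} (s t : Fin n → ℕ) :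
    ∃ r : ℕ → Fin n → ℕ, IsChainSeq r (∑ j, Nat.dist (s j) (t j)) s t ∧
      ∀ i ≤ (∑ j, Nat.dist (s j) (t j)), ∀ j,
        min (s j) (t j) ≤ r i j ∧ r i j ≤ max (s j) (t j) :=
  chain_exists_aux _ s t rfl

lemma aux_main {n : ℕ} {A B : Set (Fin n → ℕ)}
    (hA : IsGrid A) (hB : IsGrid B) {p : Fin n → ℕ} (hpA : p ∈ A) (hpB : p ∈ B)
    {s₁ s₂ : Fin n → ℕ} (hs₁ : s₁ ∈ A) (hs₂ : s₂ ∈ B) :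
    ∃ (k : ℕ) (r : ℕ → (Fin n → ℕ)),
      IsChainSeq r k s₁ s₂ ∧
      k = ∑ j, Nat.dist (s₁ j) (s₂ j) ∧
      ∀ i ≤ k, r i ∈ A ∪ B := by
  obtain ⟨LA, UA, _, rfl⟩ := hA
  obtain ⟨LB, UB, _, rfl⟩ := hB
  set m : Fin n → ℕ := fun j => max (min (s₁ j) (s₂ j)) (min (max (s₁ j) (s₂ j)) (p j))
    with hm
  have hmb : ∀ j, min (s₁ j) (s₂ j) ≤ m j ∧ m j ≤ max (s₁ j) (s₂ j) := fun j => by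
    simp only [hm]; omega
  have hmA : ∀ j, LA j ≤ m j ∧ m j ≤ UA j := fun j => by
    have h1 := hs₁ j; have h2 := hpA j
    simp only [hm]; omega
  have hmB : ∀ j, LB j ≤ m j ∧ m j ≤ UB j := fun j => by
    have h1 := hs₂ j; have h2 := hpB j
    simp only [hm]; omega
  obtain ⟨r₁, hc₁, hb₁⟩ := chain_exists s₁ m
  obtain ⟨r₂, hc₂, hb₂⟩ := chain_exists m s₂
  set k₁ := ∑ j, Nat.dist (s₁ j) (m j) with hk₁
  set k₂ := ∑ j, Nat.dist (m j) (s₂ j) with hk₂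
  have hksum : k₁ + k₂ = ∑ j, Nat.dist (s₁ j) (s₂ j) := by
    rw [hk₁, hk₂, ← Finset.sum_add_distrib]
    refine Finset.sum_congr rfl fun j _ => ?_
    have := hmb j
    simp only [nat_dist_def]
    omega
  refine ⟨k₁ + k₂, fun i => if i < k₁ then r₁ i else r₂ (i - k₁), ⟨?_, ?_, ?_⟩, hksum.symm.symm, ?_⟩
  · rcases Nat.eq_zero_or_pos k₁ with h0 | h0
    · simp only [if_neg (by omega : ¬ 0 < k₁), Nat.zero_sub]
      have hm₁ : m = s₁ := by rw [← hc₁.2.1, h0, hc₁.1]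
      exact hc₂.1.trans hm₁
    · simp only [if_pos h0]; exact hc₁.1
  · simp only [if_neg (by omega : ¬ k₁ + k₂ < k₁), Nat.add_sub_cancel_left]
    exact hc₂.2.1
  · intro i hi
    rcases lt_trichotomy (i + 1) k₁ with h | h | h
    · obtain ⟨j, h1, h2⟩ := hc₁.2.2 i (by omega)
      refine ⟨j, ?_, ?_⟩
      · simp only [if_pos h, if_pos (by omega : i < k₁)]; exact h1
      · intro j' hj'; simp only [if_pos h, if_pos (by omega : i < k₁)]; exact h2 j' hj'
    · obtain ⟨j, h1, h2⟩ := hc₁.2.2 i (by omega)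
      have e1 : ¬ (i + 1 < k₁) := by omega
      have e2 : i + 1 - k₁ = 0 := by omega
      have e3 : r₂ 0 = r₁ (i + 1) := by rw [hc₂.1, ← hc₁.2.1, ← h]
      refine ⟨j, ?_, ?_⟩
      · simp only [if_neg e1, e2, e3, if_pos (by omega : i < k₁)]; exact h1
      · intro j' hj'; simp only [if_neg e1, e2, e3, if_pos (by omega : i < k₁)]
        exact h2 j' hj'
    · obtain ⟨j, h1, h2⟩ := hc₂.2.2 (i - k₁) (by omega)
      have e1 : ¬ (i + 1 < k₁) := by omega
      have e2 : ¬ (i < k₁) := by omega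
      have e3 : i + 1 - k₁ = (i - k₁) + 1 := by omega
      refine ⟨j, ?_, ?_⟩
      · simp only [if_neg e1, if_neg e2, e3]; exact h1
      · intro j' hj'; simp only [if_neg e1, if_neg e2, e3]; exact h2 j' hj'
  · intro i hi
    by_cases h : i < k₁
    · simp only [if_pos h]
      left
      intro j
      have hb := hb₁ i (by omega) j
      have h1 := hs₁ j
      have h2 := hmA j
      omega
    · simp only [if_neg h]
      right
      intro j
      have hb := hb₂ (i - k₁) (by omega) j
      have h1 := hs₂ j
      have h2 := hmB j
      omega

/-- Two overlapping grids: between any two points of their union there is a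
shortest chain staying inside the union. -/
theorem overlapping_grids_shortest_chain {n : ℕ} {G₁ G₂ : Set (Fin n → ℕ)}
    (h₁ : IsGrid G₁) (h₂ : IsGrid G₂) (hov : (G₁ ∩ G₂).Nonempty)
    {s₁ s₂ : Fin n → ℕ} (hs₁ : s₁ ∈ G₁ ∪ G₂) (hs₂ : s₂ ∈ G₁ ∪ G₂) :
    ∃ (k : ℕ) (r : ℕ → (Fin n → ℕ)),
      IsChainSeq r k s₁ s₂ ∧
      k = ∑ j, Nat.dist (s₁ j) (s₂ j) ∧
      ∀ i ≤ k, r i ∈ G₁ ∪ G₂ := by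
  obtain ⟨p, hp₁, hp₂⟩ := hov
  rcases hs₁ with h1 | h1 <;> rcases hs₂ with h2 | h2
  · obtain ⟨k, r, hc, hk, hmem⟩ := aux_main h₁ h₁ hp₁ hp₁ h1 h2
    exact ⟨k, r, hc, hk, fun i hi => by
      rcases hmem i hi with h | h <;> exact Or.inl h⟩
  · exact aux_main h₁ h₂ hp₁ hp₂ h1 h2
  · obtain ⟨k, r, hc, hk, hmem⟩ := aux_main h₂ h₁ hp₂ hp₁ h1 h2
    exact ⟨k, r, hc, hk, fun i hi => (hmem i hi).symm⟩
  · obtain ⟨k, r, hc, hk, hmem⟩ := aux_main h₂ h₂ hp₂ hp₂ h1 h2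
    exact ⟨k, r, hc, hk, fun i hi => by
      rcases hmem i hi with h | h <;> exact Or.inr h⟩
end

section
/- Let $\mathcal{G}_1, \mathcal{G}_2 \subseteq \mathbb{N}^n$ be two overlapping grids, and let $\vec{s}_1 \in \mathcal{G}_1$ and $\vec{s}_2 \in \mathcal{G}_2$. Then there exists a shortest chain $\{\vec{r}_0, \dots, \vec{r}_k\}$ from $\vec{s}_1$ to $\vec{s}_2$ contained in $\mathcal{G}_1 \cup \mathcal{G}_2$, together with an index $\alpha \in \{0, \dots, k\}$ such that $\vec{r}_i \in \mathcal{G}_1$ for all $i \leq \alpha$ and $\vec{r}_i \in \mathcal{G}_2$ for all $i \geq \alpha$. -/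
/-- There is a shortest chain between any two points that stays coordinatewise
between them. -/
lemma exists_mono_chain {n : ℕ} (k : ℕ) : ∀ a b : Fin n → ℕ,
    (∑ j, Nat.dist (a j) (b j)) = k →
    ∃ r : ℕ → (Fin n → ℕ), IsChainSeq r k a b ∧
      ∀ i ≤ k, ∀ j, min (a j) (b j) ≤ r i j ∧ r i j ≤ max (a j) (b j) := by
  induction k with
  | zero =>
    intro a b hsum
    have hab : a = b := by
      funext j
      have := Finset.sum_eq_zero_iff.mp hsum j (Finset.mem_univ j)
      simp [Nat.dist] at this
      omega
    refine ⟨fun _ => a, ⟨rfl, hab, fun i hi => by omega⟩, ?_⟩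
    intro i hi j
    subst hab
    simp
  | succ k ih =>
    intro a b hsum
    have hne : ∃ j, a j ≠ b j := by
      by_contra h
      push_neg at h
      have : (∑ j, Nat.dist (a j) (b j)) = 0 := by
        apply Finset.sum_eq_zero
        intro j _
        simp [h j, Nat.dist]
      omega
    obtain ⟨j, hj⟩ := hne
    set c : ℕ := if a j < b j then a j + 1 else a j - 1 with hc
    set a' : Fin n → ℕ := Function.update a j c with ha'
    have hstep : (a' j = a j + 1 ∨ a j = a' j + 1) ∧ ∀ j' ≠ j, a' j' = a j' := by
      constructor
      · simp only [ha', Function.update_self, hc]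
        split <;> omega
      · intro j' hj'
        simp [ha', Function.update_of_ne hj']
    have hbet : min (a j) (b j) ≤ a' j ∧ a' j ≤ max (a j) (b j) := by
      simp only [ha', Function.update_self, hc]
      split <;> omega
    have hdist : Nat.dist (a' j) (b j) + 1 = Nat.dist (a j) (b j) := by
      simp only [ha', Function.update_self, hc, Nat.dist]
      split <;> omega
    have hsum' : (∑ j', Nat.dist (a' j') (b j')) = k := by
      have h1 : Nat.dist (a' j) (b j) + ∑ x ∈ Finset.univ.erase j, Nat.dist (a' x) (b x)
          = ∑ x, Nat.dist (a' x) (b x) :=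
        Finset.add_sum_erase Finset.univ (fun j' => Nat.dist (a' j') (b j')) (Finset.mem_univ j)
      have h2 : Nat.dist (a j) (b j) + ∑ x ∈ Finset.univ.erase j, Nat.dist (a x) (b x)
          = ∑ x, Nat.dist (a x) (b x) :=
        Finset.add_sum_erase Finset.univ (fun j' => Nat.dist (a j') (b j')) (Finset.mem_univ j)
      have h3 : ∑ x ∈ Finset.univ.erase j, Nat.dist (a' x) (b x)
          = ∑ x ∈ Finset.univ.erase j, Nat.dist (a x) (b x) := by
        apply Finset.sum_congr rfl
        intro x hx
        rw [hstep.2 x (Finset.ne_of_mem_erase hx)]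
      omega
    obtain ⟨r', ⟨hr0, hrk, hrs⟩, hrbet⟩ := ih a' b hsum'
    set r : ℕ → (Fin n → ℕ) := fun i => if i = 0 then a else r' (i - 1) with hrdef
    have e0 : r 0 = a := by simp [hrdef]
    have e : ∀ t, r (t + 1) = r' t := by intro t; simp [hrdef]
    refine ⟨r, ⟨e0, ?_, ?_⟩, ?_⟩
    · rw [e k, hrk]
    · intro i hi
      rcases Nat.eq_zero_or_pos i with h0 | h0
      · subst h0
        refine ⟨j, ?_, ?_⟩
        · rw [e 0, hr0, e0]; exact hstep.1
        · intro j' hj'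
          rw [e 0, hr0, e0]; exact hstep.2 j' hj'
      · obtain ⟨i', rfl⟩ := Nat.exists_eq_succ_of_ne_zero (Nat.pos_iff_ne_zero.mp h0)
        obtain ⟨j₀, hj₀⟩ := hrs i' (by omega)
        refine ⟨j₀, ?_, ?_⟩
        · rw [e (i' + 1), e i']; exact hj₀.1
        · intro j' hj'
          rw [e (i' + 1), e i']; exact hj₀.2 j' hj'
    · intro i hi j'
      rcases Nat.eq_zero_or_pos i with h0 | h0
      · subst h0; rw [e0]; omega
      · obtain ⟨i', rfl⟩ := Nat.exists_eq_succ_of_ne_zero (Nat.pos_iff_ne_zero.mp h0)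
        have h4 := hrbet i' (by omega) j'
        rw [e i']
        rcases eq_or_ne j' j with rfl | hne
        · omega
        · rw [hstep.2 j' hne] at h4
          omega

/-- Between `s₁ ∈ G₁` and `s₂ ∈ G₂` (overlapping grids) there is a shortest chain in
`G₁ ∪ G₂` that first stays in `G₁` (up to some index `α`) and then in `G₂`. -/
theorem overlapping_grids_shortest_chain_split {n : ℕ} {G₁ G₂ : Set (Fin n → ℕ)}
    (h₁ : IsGrid G₁) (h₂ : IsGrid G₂) (hov : (G₁ ∩ G₂).Nonempty)
    {s₁ s₂ : Fin n → ℕ} (hs₁ : s₁ ∈ G₁) (hs₂ : s₂ ∈ G₂) :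
    ∃ (k : ℕ) (r : ℕ → (Fin n → ℕ)) (α : ℕ),
      IsChainSeq r k s₁ s₂ ∧
      k = ∑ j, Nat.dist (s₁ j) (s₂ j) ∧
      (∀ i ≤ k, r i ∈ G₁ ∪ G₂) ∧
      α ≤ k ∧
      (∀ i ≤ α, r i ∈ G₁) ∧
      (∀ i, α ≤ i → i ≤ k → r i ∈ G₂) := by
  obtain ⟨L₁, U₁, hLU₁, rfl⟩ := h₁
  obtain ⟨L₂, U₂, hLU₂, rfl⟩ := h₂
  obtain ⟨p, hp₁, hp₂⟩ := hov
  -- median point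
  set m : Fin n → ℕ :=
    fun j => max (min (s₁ j) (s₂ j)) (min (max (s₁ j) (s₂ j)) (p j)) with hm
  have hm₁ : ∀ j, L₁ j ≤ m j ∧ m j ≤ U₁ j := by
    intro j
    have h1 := hs₁ j; have h2 := hp₁ j
    simp only [hm]; omega
  have hm₂ : ∀ j, L₂ j ≤ m j ∧ m j ≤ U₂ j := by
    intro j
    have h1 := hs₂ j; have h2 := hp₂ j
    simp only [hm]; omega
  have hmbet : ∀ j, Nat.dist (s₁ j) (m j) + Nat.dist (m j) (s₂ j)
      = Nat.dist (s₁ j) (s₂ j) := by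
    intro j
    simp only [hm, Nat.dist]; omega
  obtain ⟨r₁, ⟨hr₁0, hr₁k, hr₁s⟩, hr₁bet⟩ :=
    exists_mono_chain (∑ j, Nat.dist (s₁ j) (m j)) s₁ m rfl
  obtain ⟨r₂, ⟨hr₂0, hr₂k, hr₂s⟩, hr₂bet⟩ :=
    exists_mono_chain (∑ j, Nat.dist (m j) (s₂ j)) m s₂ rfl
  set k₁ := ∑ j, Nat.dist (s₁ j) (m j) with hk₁
  set k₂ := ∑ j, Nat.dist (m j) (s₂ j) with hk₂
  set r : ℕ → (Fin n → ℕ) := fun i => if i ≤ k₁ then r₁ i else r₂ (i - k₁) with hr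
  have hrlo : ∀ i ≤ k₁, r i = r₁ i := by
    intro i hi; simp [hr, hi]
  have hrhi : ∀ i, k₁ ≤ i → r i = r₂ (i - k₁) := by
    intro i hi
    rcases eq_or_lt_of_le hi with rfl | hlt
    · simp [hr, hr₁k, hr₂0]
    · simp [hr, Nat.not_le.mpr hlt]
  have hmem₁ : ∀ i ≤ k₁, r i ∈ {t : Fin n → ℕ | ∀ j, L₁ j ≤ t j ∧ t j ≤ U₁ j} := by
    intro i hi
    rw [hrlo i hi]
    intro j
    have hb := hr₁bet i hi j
    have h1 := hs₁ j; have h2 := hm₁ j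
    omega
  have hmem₂ : ∀ i, k₁ ≤ i → i ≤ k₁ + k₂ →
      r i ∈ {t : Fin n → ℕ | ∀ j, L₂ j ≤ t j ∧ t j ≤ U₂ j} := by
    intro i hi hik
    rw [hrhi i hi]
    intro j
    have hb := hr₂bet (i - k₁) (by omega) j
    have h1 := hs₂ j; have h2 := hm₂ j
    omega
  refine ⟨k₁ + k₂, r, k₁, ⟨?_, ?_, ?_⟩, ?_, ?_, by omega, hmem₁, hmem₂⟩
  · rw [hrlo 0 (Nat.zero_le _), hr₁0]
  · rw [hrhi (k₁ + k₂) (by omega)]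
    simpa using hr₂k
  · intro i hi
    rcases Nat.lt_or_ge i k₁ with hlt | hge
    · obtain ⟨j, hj⟩ := hr₁s i hlt
      refine ⟨j, ?_, ?_⟩
      · rw [hrlo i (by omega), hrlo (i + 1) (by omega)]
        exact hj.1
      · intro j' hj'
        rw [hrlo i (by omega), hrlo (i + 1) (by omega)]
        exact hj.2 j' hj'
    · obtain ⟨j, hj⟩ := hr₂s (i - k₁) (by omega)
      have e2 : i + 1 - k₁ = i - k₁ + 1 := by omega
      have e1 : r (i + 1) = r₂ (i - k₁ + 1) := by
        rw [hrhi (i + 1) (by omega), e2]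
      refine ⟨j, ?_, ?_⟩
      · rw [hrhi i hge, e1]
        exact hj.1
      · intro j' hj'
        rw [hrhi i hge, e1]
        exact hj.2 j' hj'
  · rw [← Finset.sum_add_distrib]
    exact Finset.sum_congr rfl fun j _ => hmbet j
  · intro i hi
    rcases Nat.le_total i k₁ with h | h
    · exact Or.inl (hmem₁ i h)
    · exact Or.inr (hmem₂ i h hi)
end

section
/- Consider hierarchical refinement by $(\vec{p}+\vec{1})$-boxes: $\Omega_{\ell+1}$ is a union of level-$\ell$ blocks of $(p^1+1) \times \dots \times (p^n+1)$ elements. Let $\mathcal{A}$ be a set of level-$\ell$ degree-$\vec{p}$ B-splines contained in $\Omega_{\ell+1}$, and let $\phi$ be a B-spline (of level $\ell$ or $\ell+1$, of degree $\tilde p^j \in \{p^j, p^j - 1\}$ in each direction) with $\operatorname{supp}(\phi) \subseteq \Omega_{\ell+1}$ and $\operatorname{supp}(\phi) \subset \bigcup_{B \in \mathcal{A}} \overline{\operatorname{supp}(B)}$. Then there exists a level-$\ell$ degree-$\vec{p}$ B-spline $B'$ contained in $\Omega_{\ell+1}$ with $\operatorname{supp}(\phi) \subset \operatorname{supp}(B')$,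 and moreover $\operatorname{supp}(B')$ lies in the smallest axis-aligned bounding box containing $\bigcup_{B\in\mathcal{A}} \operatorname{supp}(B)$. -/
private lemma le_quot' {p q x : ℕ} (h : q * (p+1) ≤ x) : q ≤ x / (p+1) :=
  (Nat.le_div_iff_mul_le (by omega)).2 h

private lemma quot_le' {p q x : ℕ} (h : x ≤ q * (p+1) + p) : x / (p+1) ≤ q := by
  have h2 : x < (q+1)*(p+1) := by have : (q+1)*(p+1) = q*(p+1)+(p+1) := by ring
                                  omega
  exact Nat.lt_succ_iff.mp ((Nat.div_lt_iff_lt_mul (by omega)).2 h2)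

private lemma quot_eq' {p q x : ℕ} (h1 : q*(p+1) ≤ x) (h2 : x ≤ q*(p+1)+p) : x/(p+1) = q :=
  le_antisymm (quot_le' h2) (le_quot' h1)

/-- Per-direction master lemma. -/
private lemma dir_lemma (p u v : ℕ) (S : Set ℕ) (s₀ t : ℕ) (hs₀S : s₀ ∈ S) (htS : t ∈ S)
    (hs₀u : s₀ ≤ u) (hus₀ : u ≤ s₀ + p) (htv : t ≤ v) (hvt : v ≤ t + p)
    (huv : u ≤ v) (hw : v ≤ u + p) :
    ∃ s' : ℕ, s' ≤ u ∧ v ≤ s' + p ∧ (∃ s ∈ S, s ≤ s') ∧ (∃ s ∈ S, s' ≤ s) ∧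
      ∀ e c : ℕ, c ∈ S → c ≤ max u (min e v) → max u (min e v) ≤ c + p →
        s' ≤ e → e ≤ s' + p →
        c/(p+1) ≤ e/(p+1) ∧ e/(p+1) ≤ (c+p)/(p+1) := by
  have hP : 0 < p + 1 := Nat.succ_pos p
  -- base quotient facts
  have hbu : u / (p+1) * (p+1) ≤ u := Nat.div_mul_le_self u (p+1)
  have hub : u < u/(p+1)*(p+1) + (p+1) := by
    have h1 := Nat.div_add_mod u (p+1)
    have h2 : u % (p+1) < p+1 := Nat.mod_lt _ hP
    have h3 : u/(p+1)*(p+1) = (p+1)*(u/(p+1)) := Nat.mul_comm _ _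
    omega
  have hBv : v / (p+1) * (p+1) ≤ v := Nat.div_mul_le_self v (p+1)
  have hvB : v < v/(p+1)*(p+1) + (p+1) := by
    have h1 := Nat.div_add_mod v (p+1)
    have h2 : v % (p+1) < p+1 := Nat.mod_lt _ hP
    have h3 : v/(p+1)*(p+1) = (p+1)*(v/(p+1)) := Nat.mul_comm _ _
    omega
  have hqQ : u/(p+1) ≤ v/(p+1) := Nat.div_le_div_right huv
  have hbB : u/(p+1)*(p+1) ≤ v/(p+1)*(p+1) := Nat.mul_le_mul_right _ hqQ
  set b : ℕ := u/(p+1)*(p+1) with hbdef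
  set B : ℕ := v/(p+1)*(p+1) with hBdef
  set lo : ℕ := max b (v - p) with hlodef
  set hi : ℕ := min u B with hhidef
  have hlohi : lo ≤ hi := by
    apply max_le
    · exact le_min hbu hbB
    · exact le_min (by omega) (by omega)
  by_cases h1 : ∃ s ∈ S, lo ≤ s
  · by_cases h2 : ∃ s ∈ S, s ≤ hi
    · -- GOOD case
      obtain ⟨w, hwS, hlow⟩ := h1
      obtain ⟨x, hxS, hxhi⟩ := h2
      refine ⟨max lo (min hi w), ?_, ?_, ?_, ?_, ?_⟩
      · exact max_le (le_trans hlohi (min_le_left _ _))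
          (le_trans (min_le_left _ _) (min_le_left _ _))
      · have : v - p ≤ max lo (min hi w) := le_trans (le_max_right _ _) (le_max_left _ _)
        omega
      · rcases le_total w hi with hcase | hcase
        · exact ⟨w, hwS, by rw [min_eq_right hcase, max_eq_right hlow]⟩
        · exact ⟨x, hxS, by rw [min_eq_left hcase, max_eq_right hlohi]; exact hxhi⟩
      · refine ⟨w, hwS, ?_⟩
        rcases le_total w hi with hcase | hcase
        · rw [min_eq_right hcase, max_eq_right hlow]
        · rw [min_eq_left hcase, max_eq_right hlohi]; exact hcase
      · intro e c _ hcz hzc hse hes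
        have hlos : lo ≤ max lo (min hi w) := le_max_left _ _
        have hshi : max lo (min hi w) ≤ hi := max_le hlohi (min_le_left _ _)
        constructor
        · rcases le_or_gt u e with hue | hue
          · -- z ≤ e
            have hze : max u (min e v) ≤ e := max_le hue (min_le_left _ _)
            exact Nat.div_le_div_right (le_trans hcz hze)
          · -- e < u : c ≤ u, e ≥ b
            have hmin : min e v = e := min_eq_left (le_trans (le_of_lt hue) huv)
            have hcu : c ≤ u := by
              rw [hmin, max_eq_left (le_of_lt hue)] at hcz; exact hcz
            have h4 : c/(p+1) ≤ u/(p+1) := Nat.div_le_div_right hcu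
            have h5 : u/(p+1) ≤ e/(p+1) := le_quot' (by omega)
            exact le_trans h4 h5
        · rcases le_or_gt e v with hev | hev
          · have hez : e ≤ max u (min e v) := le_trans (le_min le_rfl hev) (le_max_right _ _)
            exact Nat.div_le_div_right (le_trans hez hzc)
          · -- v < e
            have hzv : max u (min e v) = v := by
              rw [min_eq_right (le_of_lt hev), max_eq_right huv]
            rw [hzv] at hzc
            have h4 : v/(p+1) ≤ (c+p)/(p+1) := Nat.div_le_div_right hzc
            have h5 : e/(p+1) ≤ v/(p+1) := quot_le' (by omega)
            exact le_trans h5 h4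
    · -- BAD II : every s ∈ S has hi < s
      push_neg at h2
      have hhiu : hi < s₀ := h2 s₀ hs₀S
      have hBu : B < u := by
        rcases le_total u B with hc | hc
        · rw [hhidef] at hhiu; omega
        · have : hi = B := min_eq_right hc
          omega
      have hhiB : hi = B := min_eq_right (le_of_lt hBu)
      rw [hhiB] at h2
      refine ⟨s₀, hs₀u, by omega, ⟨s₀, hs₀S, le_rfl⟩, ⟨s₀, hs₀S, le_rfl⟩, ?_⟩
      intro e c hcS hcz hzc hse hes
      have hBc : B < c := h2 c hcS
      have hcv : c ≤ v := le_trans hcz (max_le huv (min_le_right _ _))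
      have hsucc : (v/(p+1)+1)*(p+1) = B + (p+1) := by rw [hBdef]; ring
      have hquotc : c/(p+1) = v/(p+1) := quot_eq' (by omega) (by omega)
      have hquotcp : (c+p)/(p+1) = v/(p+1)+1 := quot_eq' (by omega) (by omega)
      have hBs₀ : B < s₀ := h2 s₀ hs₀S
      constructor
      · rw [hquotc]; exact le_quot' (by omega)
      · rw [hquotcp]; exact quot_le' (by omega)
  · -- BAD I : every s ∈ S has s < lo
    push_neg at h1
    have htlo : t < lo := h1 t htS
    have hvpt : v - p ≤ t := by omega
    have hlob : lo = b := by
      rcases max_cases b (v - p) with ⟨h, _⟩ | ⟨h, _⟩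
      · rw [hlodef, h]
      · rw [hlodef] at htlo; omega
    rw [hlob] at h1 htlo
    -- q ≥ 1 and b - (p+1) block
    have hq1 : 1 ≤ u/(p+1) := by
      by_contra hc
      have h0 : u/(p+1) = 0 := Nat.lt_one_iff.mp (Nat.not_le.mp hc)
      rw [hbdef, h0] at htlo; omega
    have hb' : (u/(p+1)-1)*(p+1) + (p+1) = b := by
      rw [hbdef]
      have : (u/(p+1)-1)*(p+1) + 1*(p+1) = (u/(p+1)-1+1)*(p+1) := by ring
      rw [show (u/(p+1)-1+1) = u/(p+1) by omega] at this
      omega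
    refine ⟨t, by omega, by omega, ⟨t, htS, le_rfl⟩, ⟨t, htS, le_rfl⟩, ?_⟩
    intro e c hcS hcz hzc hse hes
    have hcb : c < b := h1 c hcS
    have huz : u ≤ max u (min e v) := le_max_left _ _
    have hcu : u ≤ c + p := le_trans huz hzc
    have hquotc : c/(p+1) = u/(p+1) - 1 := quot_eq' (by omega) (by omega)
    have hquotcp : (c+p)/(p+1) = u/(p+1) := quot_eq' (by omega) (by omega)
    constructor
    · rw [hquotc]; exact le_quot' (by omega)
    · rw [hquotcp]; exact quot_le' (by omega)
/-- Lemma 5.5 (Assumption 3b), at the level of element indices.  Level-`ℓ`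
elements are indexed by `Fin n → ℕ`; the support of the level-`ℓ` degree-`p`
B-spline of index `s` is the element box `{e | ∀ i, s i ≤ e i ≤ s i + p i}`;
`(p+1)`-boxes are the blocks `{e | ∀ i, e i / (p i + 1) = r i}` and the refinement
domain `Ω_{ℓ+1}` is the union of the blocks indexed by `R`.  If `A` is a set of
B-spline indices contained in `Ω_{ℓ+1}` and `φ` has support box
`{e | ∀ i, u i ≤ e i ≤ v i}` of width at most `p i + 1` per direction, contained in
`Ω_{ℓ+1}` and covered by the supports of `A`, then some level-`ℓ` B-spline `s'`
contained in `Ω_{ℓ+1}` has support containing that of `φ` and contained in the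
smallest axis-aligned bounding box of `⋃_{s ∈ A} supp s`. -/
theorem exists_covering_bspline (n : ℕ) (p : Fin n → ℕ)
    (R : Set (Fin n → ℕ)) (A : Set (Fin n → ℕ)) (hA : A.Nonempty)
    (hAin : ∀ s ∈ A,
      {e : Fin n → ℕ | ∀ i, s i ≤ e i ∧ e i ≤ s i + p i} ⊆
        {e : Fin n → ℕ | ∃ r ∈ R, ∀ i, e i / (p i + 1) = r i})
    (u v : Fin n → ℕ) (huv : ∀ i, u i ≤ v i) (hwidth : ∀ i, v i ≤ u i + p i)
    (hφΩ : {e : Fin n → ℕ | ∀ i, u i ≤ e i ∧ e i ≤ v i} ⊆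
        {e : Fin n → ℕ | ∃ r ∈ R, ∀ i, e i / (p i + 1) = r i})
    (hφA : {e : Fin n → ℕ | ∀ i, u i ≤ e i ∧ e i ≤ v i} ⊆
        ⋃ s ∈ A, {e : Fin n → ℕ | ∀ i, s i ≤ e i ∧ e i ≤ s i + p i}) :
    ∃ s' : Fin n → ℕ,
      {e : Fin n → ℕ | ∀ i, s' i ≤ e i ∧ e i ≤ s' i + p i} ⊆
          {e : Fin n → ℕ | ∃ r ∈ R, ∀ i, e i / (p i + 1) = r i} ∧
      {e : Fin n → ℕ | ∀ i, u i ≤ e i ∧ e i ≤ v i} ⊆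
          {e : Fin n → ℕ | ∀ i, s' i ≤ e i ∧ e i ≤ s' i + p i} ∧
      ∀ e : Fin n → ℕ, (∀ i, s' i ≤ e i ∧ e i ≤ s' i + p i) →
        ∀ i, (∃ s₁ ∈ A, s₁ i ≤ e i) ∧ (∃ s₂ ∈ A, e i ≤ s₂ i + p i) := by
  classical
  -- u and v are in the support box of φ
  have humem : u ∈ {e : Fin n → ℕ | ∀ i, u i ≤ e i ∧ e i ≤ v i} := fun i => ⟨le_rfl, huv i⟩
  have hvmem : v ∈ {e : Fin n → ℕ | ∀ i, u i ≤ e i ∧ e i ≤ v i} := fun i => ⟨huv i, le_rfl⟩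
  have hu' := hφA humem
  have hv' := hφA hvmem
  simp only [Set.mem_iUnion, Set.mem_setOf_eq] at hu' hv'
  obtain ⟨s₀, hs₀A, hs₀⟩ := hu'
  obtain ⟨t, htA, ht⟩ := hv'
  have H : ∀ i : Fin n, ∃ s' : ℕ, s' ≤ u i ∧ v i ≤ s' + p i ∧
      (∃ s ∈ (fun s : Fin n → ℕ => s i) '' A, s ≤ s') ∧
      (∃ s ∈ (fun s : Fin n → ℕ => s i) '' A, s' ≤ s) ∧
      ∀ e c : ℕ, c ∈ (fun s : Fin n → ℕ => s i) '' A →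
        c ≤ max (u i) (min e (v i)) → max (u i) (min e (v i)) ≤ c + p i →
        s' ≤ e → e ≤ s' + p i →
        c/(p i+1) ≤ e/(p i+1) ∧ e/(p i+1) ≤ (c+p i)/(p i+1) := by
    intro i
    exact dir_lemma (p i) (u i) (v i) _ (s₀ i) (t i) ⟨s₀, hs₀A, rfl⟩ ⟨t, htA, rfl⟩
      (hs₀ i).1 (hs₀ i).2 (ht i).1 (ht i).2 (huv i) (hwidth i)
  choose s' hcov1 hcov2 hlow hupp hC3 using H
  refine ⟨s', ?_, ?_, ?_⟩
  · -- containment in Ω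
    intro e he
    simp only [Set.mem_setOf_eq] at he ⊢
    -- the clamped point z in the support box of φ
    have hz : (fun i => max (u i) (min (e i) (v i))) ∈
        {e : Fin n → ℕ | ∀ i, u i ≤ e i ∧ e i ≤ v i} :=
      fun i => ⟨le_max_left _ _, max_le (huv i) (min_le_right _ _)⟩
    have hz' := hφA hz
    simp only [Set.mem_iUnion, Set.mem_setOf_eq] at hz'
    obtain ⟨c, hcA, hcz⟩ := hz'
    have hq : ∀ i, c i/(p i+1) ≤ e i/(p i+1) ∧ e i/(p i+1) ≤ (c i+p i)/(p i+1) :=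
      fun i => hC3 i (e i) (c i) ⟨c, hcA, rfl⟩ (hcz i).1 (hcz i).2 (he i).1 (he i).2
    -- the clamped point y in the support box of c
    have hy : (fun i => max (c i) (min (e i) (c i + p i))) ∈
        {e : Fin n → ℕ | ∀ i, c i ≤ e i ∧ e i ≤ c i + p i} :=
      fun i => ⟨le_max_left _ _, max_le (Nat.le_add_right _ _) (min_le_right _ _)⟩
    obtain ⟨r, hrR, hr⟩ := hAin c hcA hy
    refine ⟨r, hrR, fun i => ?_⟩
    rw [← hr i]
    show e i / (p i + 1) = max (c i) (min (e i) (c i + p i)) / (p i + 1)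
    by_cases hec : e i ≤ c i + p i
    · by_cases hce : c i ≤ e i
      · rw [min_eq_left hec, max_eq_right hce]
      · rw [min_eq_left hec, max_eq_left (le_of_not_ge hce)]
        exact le_antisymm (Nat.div_le_div_right (le_of_not_ge hce)) (hq i).1
    · rw [min_eq_right (le_of_not_ge hec), max_eq_right (Nat.le_add_right _ _)]
      exact le_antisymm (hq i).2 (Nat.div_le_div_right (le_of_not_ge hec))
  · -- support of φ contained in support of s'
    intro e he
    simp only [Set.mem_setOf_eq] at he ⊢
    intro i
    refine ⟨le_trans (hcov1 i) (he i).1, le_trans (he i).2 ?_⟩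
    have := hcov2 i
    omega
  · -- bounding box
    intro e he i
    constructor
    · obtain ⟨x, ⟨s, hsA, hx⟩, hle⟩ := hlow i
      have hsx : s i = x := hx
      exact ⟨s, hsA, le_trans (hsx ▸ hle) (he i).1⟩
    · obtain ⟨x, ⟨s, hsA, hx⟩, hle⟩ := hupp i
      have hsx : s i = x := hx
      have h1 : s' i ≤ s i := hsx ▸ hle
      exact ⟨s, hsA, le_trans (he i).2 (Nat.add_le_add_right h1 _)⟩
end

section
/- Consider hierarchical refinement by $(\vec{p}+\vec{1})$-boxes and two level-$\ell$ degree-$\vec{p}$ B-splines $B_{\vec{s}_1}, B_{\vec{s}_2}$ contained in $\Omega_{\ell+1}$, whose closed supports share a common facet-like set: there exist $\vec{r}'$ and a direction $k_0$ such that $\overline{\operatorname{supp}(B_{\vec{s}_1})} \cap \overline{\operatorname{supp}(B_{\vec{s}_2})}$ contains the product of level-$(\ell+1)$ element intervals in all directions $k \neq k_0$ and the single breakpoint $\{\widehat{\xi}^{k_0}_{r'^{k_0},\ell+1}\}$ in direction $k_0$. Then there is a shortest chain $\{\vec{r}_0, \vec{r}_1, \dots\}$ of B-spline indices from $\vec{s}_1$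 to $\vec{s}_2$ such that every $B_{\vec{r}_i}$ is a level-$\ell$ B-spline contained in $\Omega_{\ell+1}$. -/
namespace SCAux

/-- realize a block index inside an interval of length p+1 -/
lemma realize {p y c : ℕ} (h1 : y / (p+1) ≤ c) (h2 : c ≤ (y+p)/(p+1)) :
    ∃ w, y ≤ w ∧ w ≤ y + p ∧ w / (p+1) = c := by
  have hub : (y+p)/(p+1) ≤ y/(p+1) + 1 := by
    calc (y+p)/(p+1) ≤ (y+(p+1))/(p+1) := Nat.div_le_div_right (by omega)
      _ = y/(p+1) + 1 := Nat.add_div_right _ (Nat.succ_pos p)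
  rcases eq_or_lt_of_le h1 with h | h
  · exact ⟨y, le_refl _, Nat.le_add_right _ _, h⟩
  · have : (y+p)/(p+1) = c := by omega
    exact ⟨y+p, Nat.le_add_right _ _, le_refl _, this⟩

/-- divisibility-condition: blocks of [t,t+p] inside blocks of [s,s+p] -/
def DC (p s t : ℕ) : Prop := s/(p+1) ≤ t/(p+1) ∧ (t+p)/(p+1) ≤ (s+p)/(p+1)

lemma DC.refl (p s : ℕ) : DC p s s := ⟨le_rfl, le_rfl⟩

lemma dc_w {p s t e : ℕ} (h : DC p s t) (he1 : t ≤ e) (he2 : e ≤ t + p) :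
    ∃ w, s ≤ w ∧ w ≤ s + p ∧ e/(p+1) = w/(p+1) := by
  obtain ⟨w, hw1, hw2, hw3⟩ := realize (p := p) (y := s) (c := e/(p+1))
    (h.1.trans (Nat.div_le_div_right he1))
    ((Nat.div_le_div_right he2).trans h.2)
  exact ⟨w, hw1, hw2, hw3.symm⟩

lemma midlem {p a b : ℕ} (hab : a ≤ b) (hba : b ≤ a + p) :
    ∃ M, a ≤ M ∧ M ≤ b ∧
      (∀ x, a ≤ x → x ≤ M → DC p a x) ∧
      (∀ x, M ≤ x → x ≤ b → DC p b x) := by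
  have hq : 0 < p + 1 := Nat.succ_pos p
  by_cases h : b / (p+1) = a / (p+1)
  · refine ⟨a, le_refl _, hab, ?_, ?_⟩
    · intro x h1 h2
      have : x = a := le_antisymm h2 h1
      subst this; exact DC.refl _ _
    · intro x h1 h2
      exact ⟨h ▸ Nat.div_le_div_right h1, Nat.div_le_div_right (by omega)⟩
  · have h1 : a / (p+1) ≤ b / (p+1) := Nat.div_le_div_right hab
    have h2 : b / (p+1) ≤ (a+p)/(p+1) := Nat.div_le_div_right hba
    have h3 : (a+p)/(p+1) ≤ a/(p+1) + 1 := by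
      calc (a+p)/(p+1) ≤ (a+(p+1))/(p+1) := Nat.div_le_div_right (by omega)
        _ = a/(p+1) + 1 := Nat.add_div_right _ hq
    have hb : b / (p+1) = a / (p+1) + 1 := by omega
    have haM : a < (b/(p+1)) * (p+1) := by
      rw [hb]; exact (Nat.div_lt_iff_lt_mul hq).mp (Nat.lt_succ_self _)
    refine ⟨(b/(p+1))*(p+1), le_of_lt haM, Nat.div_mul_le_self _ _, ?_, ?_⟩
    · intro x hx1 hx2
      refine ⟨Nat.div_le_div_right hx1, ?_⟩
      have hxp : x + p < (a/(p+1) + 2) * (p+1) := by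
        have : (a/(p+1) + 2) * (p+1) = (b/(p+1)) * (p+1) + (p+1) := by rw [hb]; ring
        omega
      have : (x+p)/(p+1) < a/(p+1) + 2 := (Nat.div_lt_iff_lt_mul hq).mpr hxp
      have hap : a/(p+1) + 1 ≤ (a+p)/(p+1) := hb ▸ h2
      omega
    · intro x hx1 hx2
      exact ⟨(Nat.le_div_iff_mul_le hq).mpr hx1, Nat.div_le_div_right (by omega)⟩

lemma touchlem {p a b x z : ℕ} (hab : a ≤ b) (hba : b ≤ a + (p+1))
    (hax : a ≤ x) (hxb : x ≤ b) (hz1 : x ≤ z) (hz2 : z ≤ x + p) :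
    (∃ w, a ≤ w ∧ w ≤ a + p ∧ z/(p+1) = w/(p+1)) ∨
    (∃ w, b ≤ w ∧ w ≤ b + p ∧ z/(p+1) = w/(p+1)) := by
  have hq : 0 < p + 1 := Nat.succ_pos p
  have hca : a/(p+1) ≤ z/(p+1) := Nat.div_le_div_right (hax.trans hz1)
  by_cases h : z/(p+1) ≤ (a+p)/(p+1)
  · obtain ⟨w, hw1, hw2, hw3⟩ := realize hca h
    exact Or.inl ⟨w, hw1, hw2, hw3.symm⟩
  · push_neg at h
    have hcb2 : z/(p+1) ≤ (b+p)/(p+1) := Nat.div_le_div_right (by omega)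
    have hcb1 : b/(p+1) ≤ z/(p+1) := by
      have e1 : b/(p+1) ≤ (a+p+1)/(p+1) := Nat.div_le_div_right (by omega)
      have e2 : (a+p+1)/(p+1) ≤ (a+p)/(p+1) + 1 := by
        calc (a+p+1)/(p+1) ≤ ((a+p)+(p+1))/(p+1) := Nat.div_le_div_right (by omega)
          _ = (a+p)/(p+1) + 1 := Nat.add_div_right _ hq
      omega
    obtain ⟨w, hw1, hw2, hw3⟩ := realize hcb1 hcb2
    exact Or.inr ⟨w, hw1, hw2, hw3.symm⟩




lemma chain_single {n : ℕ} (s : Fin n → ℕ) (j : Fin n) (v : ℕ) :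
    ∃ r : ℕ → (Fin n → ℕ),
      IsChainSeq r (Nat.dist (s j) v) s (Function.update s j v) ∧
      ∀ i, (∀ j', j' ≠ j → r i j' = s j') ∧
        min (s j) v ≤ r i j ∧ r i j ≤ max (s j) v := by
  rcases le_total (s j) v with h | h
  · refine ⟨fun i => Function.update s j (min (s j + i) v), ⟨?_, ?_, ?_⟩, ?_⟩
    · have h0 : min (s j + 0) v = s j := by omega
      simp only [h0, Function.update_eq_self]
    · have h0 : min (s j + Nat.dist (s j) v) v = v := by simp [Nat.dist]; omega
      simp only [h0]
    · intro i hi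
      simp only [Nat.dist] at hi
      refine ⟨j, ?_, ?_⟩
      · simp only [Function.update_self]
        left; omega
      · intro j' hj'
        simp only [Function.update_of_ne hj']
    · intro i
      refine ⟨fun j' hj' => Function.update_of_ne hj' _ _, ?_, ?_⟩ <;>
        simp only [Function.update_self] <;> omega
  · refine ⟨fun i => Function.update s j (s j - min i (s j - v)), ⟨?_, ?_, ?_⟩, ?_⟩
    · have h0 : s j - min 0 (s j - v) = s j := by omega
      simp only [h0, Function.update_eq_self]
    · have h0 : s j - min (Nat.dist (s j) v) (s j - v) = v := by simp [Nat.dist]; omega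
      simp only [h0]
    · intro i hi
      simp only [Nat.dist] at hi
      refine ⟨j, ?_, ?_⟩
      · simp only [Function.update_self]
        right; omega
      · intro j' hj'
        simp only [Function.update_of_ne hj']
    · intro i
      refine ⟨fun j' hj' => Function.update_of_ne hj' _ _, ?_, ?_⟩ <;>
        simp only [Function.update_self] <;> omega

lemma chain_concat {n k₁ k₂ : ℕ} {r₁ r₂ : ℕ → Fin n → ℕ} {s a t : Fin n → ℕ}
    (h₁ : IsChainSeq r₁ k₁ s a) (h₂ : IsChainSeq r₂ k₂ a t) :
    ∃ r, IsChainSeq r (k₁ + k₂) s t ∧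
      ∀ i, (∃ i', i' ≤ k₁ ∧ r i = r₁ i') ∨ (∃ i', i' ≤ k₂ ∧ r i = r₂ i') := by
  obtain ⟨e10, e11, st1⟩ := h₁
  obtain ⟨e20, e21, st2⟩ := h₂
  have key : ∀ i, k₁ ≤ i →
      (if i < k₁ then r₁ i else r₂ (min (i - k₁) k₂)) = r₂ (min (i - k₁) k₂) := by
    intro i hi
    simp [Nat.not_lt.mpr hi]
  refine ⟨fun i => if i < k₁ then r₁ i else r₂ (min (i - k₁) k₂), ⟨?_, ?_, ?_⟩, ?_⟩
  · by_cases h : 0 < k₁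
    · simp [h, e10]
    · have hk : k₁ = 0 := by omega
      subst hk
      show (if 0 < 0 then r₁ 0 else r₂ (min (0 - 0) k₂)) = s
      have h0 : min (0 - 0) k₂ = 0 := by omega
      rw [if_neg (lt_irrefl 0), h0, e20, ← e11, e10]
  · have h : ¬ (k₁ + k₂ < k₁) := by omega
    have h0 : min (k₁ + k₂ - k₁) k₂ = k₂ := by omega
    simp only [h, if_false, h0, e21]
  · intro i hi
    by_cases h : i + 1 ≤ k₁
    · have hi1 : i < k₁ := by omega
      obtain ⟨j, hst, hoth⟩ := st1 i hi1
      have hri : (if i < k₁ then r₁ i else r₂ (min (i - k₁) k₂)) = r₁ i := by simp [hi1]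
      have hri1 : (if i + 1 < k₁ then r₁ (i+1) else r₂ (min (i + 1 - k₁) k₂)) = r₁ (i+1) := by
        by_cases h2 : i + 1 < k₁
        · simp [h2]
        · have h4 : i + 1 = k₁ := by omega
          have h3 : min (i + 1 - k₁) k₂ = 0 := by omega
          rw [if_neg h2, h3, e20, ← e11, h4]
      refine ⟨j, ?_, ?_⟩
      · simp only [hri, hri1]; exact hst
      · intro j' hj'; simp only [hri, hri1]; exact hoth j' hj'
    · have hge : k₁ ≤ i := by omega
      have hlt : i - k₁ < k₂ := by omega
      obtain ⟨j, hst, hoth⟩ := st2 (i - k₁) hlt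
      have hri : (if i < k₁ then r₁ i else r₂ (min (i - k₁) k₂)) = r₂ (i - k₁) := by
        have h3 : min (i - k₁) k₂ = i - k₁ := by omega
        rw [key i hge, h3]
      have hri1 : (if i + 1 < k₁ then r₁ (i+1) else r₂ (min (i + 1 - k₁) k₂)) = r₂ (i - k₁ + 1) := by
        have h3 : min (i + 1 - k₁) k₂ = i - k₁ + 1 := by omega
        rw [key (i+1) (by omega), h3]
      refine ⟨j, ?_, ?_⟩
      · simp only [hri, hri1]; exact hst
      · intro j' hj'; simp only [hri, hri1]; exact hoth j' hj'
  · intro i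
    by_cases h : i < k₁
    · exact Or.inl ⟨i, le_of_lt h, by simp [h]⟩
    · exact Or.inr ⟨min (i - k₁) k₂, min_le_right _ _, by simp [h]⟩

lemma chain_multi {n : ℕ} (v : Fin n → ℕ) :
    ∀ (L : List (Fin n)), L.Nodup → ∀ (s : Fin n → ℕ),
    ∃ r, IsChainSeq r ((L.map fun j => Nat.dist (s j) (v j)).sum) s
        (fun j => if j ∈ L then v j else s j) ∧
      ∀ i j, min (s j) (v j) ≤ r i j ∧ r i j ≤ max (s j) (v j) := by
  intro L
  induction L with
  | nil =>
    intro _ s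
    refine ⟨fun _ => s, ⟨rfl, by simp, by intro i hi; simp at hi⟩, ?_⟩
    intro i j; exact ⟨min_le_left _ _, le_max_left _ _⟩
  | cons j L ih =>
    intro hnd s
    have hj : j ∉ L := (List.nodup_cons.mp hnd).1
    obtain ⟨r₁, hc₁, hv₁⟩ := chain_single s j (v j)
    obtain ⟨r₂, hc₂, hv₂⟩ := ih (List.nodup_cons.mp hnd).2 (Function.update s j (v j))
    have hend : (fun j' => if j' ∈ L then v j' else Function.update s j (v j) j')
        = (fun j' => if j' ∈ (j :: L) then v j' else s j') := by
      funext j'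
      by_cases h : j' = j
      · subst h; simp [hj]
      · rw [Function.update_of_ne h]
        simp [List.mem_cons, h]
    have hsum : (L.map fun j' => Nat.dist (Function.update s j (v j) j') (v j')).sum
        = (L.map fun j' => Nat.dist (s j') (v j')).sum := by
      congr 1
      apply List.map_congr_left
      intro j' hj'
      have h : j' ≠ j := fun h => hj (h ▸ hj')
      rw [Function.update_of_ne h]
    rw [hend, hsum] at hc₂
    obtain ⟨r, hc, hvert⟩ := chain_concat hc₁ hc₂
    refine ⟨r, by simpa [List.map_cons, List.sum_cons] using hc, ?_⟩
    intro i j'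
    rcases hvert i with ⟨i', _, heq⟩ | ⟨i', _, heq⟩
    · rw [heq]
      by_cases h : j' = j
      · subst h; exact ⟨(hv₁ i').2.1, (hv₁ i').2.2⟩
      · rw [(hv₁ i').1 j' h]; exact ⟨min_le_left _ _, le_max_left _ _⟩
    · rw [heq]
      have hb := hv₂ i' j'
      by_cases h : j' = j
      · subst h; rw [Function.update_self] at hb; omega
      · rw [Function.update_of_ne h] at hb; exact hb

end SCAux

/-- Lemma 5.4 (Assumption 3a), at the level of element indices.  The support of
the level-`ℓ` degree-`p` B-spline of index `s` is the element box
`{e | ∀ i, s i ≤ e i ≤ s i + p i}`; the refinement domain `Ω_{ℓ+1}` is the union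
of the `(p+1)`-boxes `{e | ∀ i, e i / (p i + 1) = r i}`, `r ∈ R`.  If two
B-splines `s₁, s₂` contained in `Ω_{ℓ+1}` have closed supports sharing a
facet-like set — their supports overlap in an element in every direction
`k ≠ k₀`, and touch in direction `k₀` — then there is a shortest chain of indices
from `s₁` to `s₂` all of whose B-splines are contained in `Ω_{ℓ+1}`. -/
theorem shortest_chain_of_contained_bsplines (n : ℕ) (p : Fin n → ℕ)
    (R : Set (Fin n → ℕ)) (s₁ s₂ : Fin n → ℕ) (k₀ : Fin n)
    (hs₁ : {e : Fin n → ℕ | ∀ i, s₁ i ≤ e i ∧ e i ≤ s₁ i + p i} ⊆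
        {e : Fin n → ℕ | ∃ r ∈ R, ∀ i, e i / (p i + 1) = r i})
    (hs₂ : {e : Fin n → ℕ | ∀ i, s₂ i ≤ e i ∧ e i ≤ s₂ i + p i} ⊆
        {e : Fin n → ℕ | ∃ r ∈ R, ∀ i, e i / (p i + 1) = r i})
    (hperp : ∀ k : Fin n, k ≠ k₀ →
        max (s₁ k) (s₂ k) ≤ min (s₁ k) (s₂ k) + p k)
    (htouch : s₁ k₀ ≤ s₂ k₀ + (p k₀ + 1) ∧ s₂ k₀ ≤ s₁ k₀ + (p k₀ + 1)) :
    ∃ (k : ℕ) (r : ℕ → (Fin n → ℕ)),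
      IsChainSeq r k s₁ s₂ ∧
      k = ∑ j, Nat.dist (s₁ j) (s₂ j) ∧
      ∀ i ≤ k,
        {e : Fin n → ℕ | ∀ i', r i i' ≤ e i' ∧ e i' ≤ r i i' + p i'} ⊆
          {e : Fin n → ℕ | ∃ rr ∈ R, ∀ i', e i' / (p i' + 1) = rr i'} := by
  classical
  -- certificate lemma
  have cert : ∀ (s : Fin n → ℕ),
      ({e : Fin n → ℕ | ∀ i, s i ≤ e i ∧ e i ≤ s i + p i} ⊆
          {e : Fin n → ℕ | ∃ r ∈ R, ∀ i, e i / (p i + 1) = r i}) →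
      ∀ e : Fin n → ℕ,
      (∀ k, ∃ w, s k ≤ w ∧ w ≤ s k + p k ∧ e k / (p k + 1) = w / (p k + 1)) →
      ∃ rr ∈ R, ∀ i, e i / (p i + 1) = rr i := by
    intro s hs e h
    choose w h1 h2 h3 using h
    obtain ⟨rr, hrr, hq⟩ := hs (show w ∈ _ from fun i => ⟨h1 i, h2 i⟩)
    exact ⟨rr, hrr, fun i => (h3 i).trans (hq i)⟩
  -- midpoints
  have hmid : ∀ k : Fin n, ∃ M, (k = k₀ → M = s₁ k₀) ∧ (k ≠ k₀ →
      min (s₁ k) (s₂ k) ≤ M ∧ M ≤ max (s₁ k) (s₂ k) ∧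
      (∀ x, min (s₁ k) (s₂ k) ≤ x → x ≤ M → SCAux.DC (p k) (min (s₁ k) (s₂ k)) x) ∧
      (∀ x, M ≤ x → x ≤ max (s₁ k) (s₂ k) → SCAux.DC (p k) (max (s₁ k) (s₂ k)) x)) := by
    intro k
    by_cases hk : k = k₀
    · exact ⟨s₁ k₀, fun _ => rfl, fun h => absurd hk h⟩
    · obtain ⟨M, h1, h2, h3, h4⟩ := SCAux.midlem (min_le_max) (hperp k hk)
      exact ⟨M, fun h => absurd h hk, fun _ => ⟨h1, h2, h3, h4⟩⟩
  choose M hM₀ hM using hmid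
  have hMk₀ : M k₀ = s₁ k₀ := hM₀ k₀ rfl
  have hM₂k : ∀ k, k ≠ k₀ → Function.update M k₀ (s₂ k₀) k = M k :=
    fun k hk => Function.update_of_ne hk _ _
  have hM₂k₀ : Function.update M k₀ (s₂ k₀) k₀ = s₂ k₀ := Function.update_self _ _ _
  -- DC facts
  have hDC1 : ∀ (j : Fin n) (x : ℕ), min (s₁ j) (M j) ≤ x → x ≤ max (s₁ j) (M j) →
      SCAux.DC (p j) (s₁ j) x := by
    intro j x hx1 hx2
    by_cases hj : j = k₀
    · subst hj; rw [hMk₀] at hx1 hx2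
      have hx : x = s₁ j := by omega
      subst hx; exact SCAux.DC.refl _ _
    · obtain ⟨hm1, hm2, hcl3, hcl4⟩ := hM j hj
      rcases le_total (s₁ j) (s₂ j) with h | h
      · have ha : min (s₁ j) (s₂ j) = s₁ j := min_eq_left h
        have := hcl3 x (by omega) (by omega)
        rwa [ha] at this
      · have hb : max (s₁ j) (s₂ j) = s₁ j := max_eq_left h
        have := hcl4 x (by omega) (by omega)
        rwa [hb] at this
  have hDC3 : ∀ (j : Fin n) (x : ℕ),
      min (Function.update M k₀ (s₂ k₀) j) (s₂ j) ≤ x →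
      x ≤ max (Function.update M k₀ (s₂ k₀) j) (s₂ j) →
      SCAux.DC (p j) (s₂ j) x := by
    intro j x hx1 hx2
    by_cases hj : j = k₀
    · subst hj; rw [hM₂k₀] at hx1 hx2
      have hx : x = s₂ j := by omega
      subst hx; exact SCAux.DC.refl _ _
    · rw [hM₂k j hj] at hx1 hx2
      obtain ⟨hm1, hm2, hcl3, hcl4⟩ := hM j hj
      rcases le_total (s₁ j) (s₂ j) with h | h
      · have hb : max (s₁ j) (s₂ j) = s₂ j := max_eq_right h
        have := hcl4 x (by omega) (by omega)
        rwa [hb] at this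
      · have ha : min (s₁ j) (s₂ j) = s₂ j := min_eq_right h
        have := hcl3 x (by omega) (by omega)
        rwa [ha] at this
  have hDCM : ∀ k, k ≠ k₀ → SCAux.DC (p k) (s₁ k) (M k) ∧ SCAux.DC (p k) (s₂ k) (M k) := by
    intro k hk
    refine ⟨hDC1 k (M k) (min_le_right _ _) (le_max_right _ _), ?_⟩
    exact hDC3 k (M k) (by rw [hM₂k k hk]; exact min_le_left _ _)
      (by rw [hM₂k k hk]; exact le_max_left _ _)
  -- the three chains
  obtain ⟨rA, hcA, hvA⟩ := SCAux.chain_multi M (List.finRange n) (List.nodup_finRange n) s₁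
  have hendA : (fun j => if j ∈ List.finRange n then M j else s₁ j) = M := by
    funext j'; simp [List.mem_finRange]
  rw [hendA] at hcA
  obtain ⟨rB, hcB, hvB⟩ := SCAux.chain_single M k₀ (s₂ k₀)
  obtain ⟨rC, hcC, hvC⟩ := SCAux.chain_multi s₂ (List.finRange n) (List.nodup_finRange n)
    (Function.update M k₀ (s₂ k₀))
  have hendC : (fun j => if j ∈ List.finRange n then s₂ j
      else Function.update M k₀ (s₂ k₀) j) = s₂ := by
    funext j'; simp [List.mem_finRange]
  rw [hendC] at hcC
  obtain ⟨rAB, hcAB, hvAB⟩ := SCAux.chain_concat hcA hcB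
  obtain ⟨r, hc, hv⟩ := SCAux.chain_concat hcAB hcC
  refine ⟨_, r, hc, ?_, ?_⟩
  · -- length
    have hite : (∑ j : Fin n, (if j = k₀ then Nat.dist (s₁ k₀) (s₂ k₀) else 0))
        = Nat.dist (s₁ k₀) (s₂ k₀) := by simp
    have key : ∀ j : Fin n,
        (Nat.dist (s₁ j) (M j) + (if j = k₀ then Nat.dist (s₁ k₀) (s₂ k₀) else 0))
          + Nat.dist (Function.update M k₀ (s₂ k₀) j) (s₂ j)
        = Nat.dist (s₁ j) (s₂ j) := by
      intro j
      by_cases hj : j = k₀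
      · subst hj
        rw [hMk₀, hM₂k₀, if_pos rfl]
        simp [Nat.dist]
      · rw [hM₂k j hj, if_neg hj]
        obtain ⟨hm1, hm2, _, _⟩ := hM j hj
        simp only [Nat.dist]
        omega
    rw [hMk₀]
    rw [show ((List.finRange n).map fun j => Nat.dist (s₁ j) (M j)).sum
        = ∑ j, Nat.dist (s₁ j) (M j) from (Fin.sum_univ_def _).symm]
    rw [show ((List.finRange n).map fun j =>
          Nat.dist (Function.update M k₀ (s₂ k₀) j) (s₂ j)).sum
        = ∑ j, Nat.dist (Function.update M k₀ (s₂ k₀) j) (s₂ j)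
        from (Fin.sum_univ_def _).symm]
    rw [← hite, ← Finset.sum_add_distrib, ← Finset.sum_add_distrib]
    exact Finset.sum_congr rfl (fun j _ => key j)
  · -- containment of every vertex
    intro i _ e he
    simp only [Set.mem_setOf_eq] at he ⊢
    rcases hv i with ⟨i', _, heq⟩ | ⟨i', _, heq⟩
    · rcases hvAB i' with ⟨i'', _, heq'⟩ | ⟨i'', _, heq'⟩
      · -- phase A vertex
        have hg : ∀ j, min (s₁ j) (M j) ≤ r i j ∧ r i j ≤ max (s₁ j) (M j) := by
          intro j; rw [heq, heq']; exact hvA i'' j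
        exact cert s₁ hs₁ e (fun k =>
          SCAux.dc_w (hDC1 k (r i k) (hg k).1 (hg k).2) (he k).1 (he k).2)
      · -- phase B vertex
        have hg1 : ∀ j, j ≠ k₀ → r i j = M j := by
          intro j hj; rw [heq, heq']; exact (hvB i'').1 j hj
        have hg2 : min (s₁ k₀) (s₂ k₀) ≤ r i k₀ ∧ r i k₀ ≤ max (s₁ k₀) (s₂ k₀) := by
          have := (hvB i'').2
          rw [hMk₀] at this
          rw [heq, heq']
          exact this
        have htl := SCAux.touchlem (p := p k₀) (a := min (s₁ k₀) (s₂ k₀))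
          (b := max (s₁ k₀) (s₂ k₀)) (x := r i k₀) (z := e k₀)
          min_le_max (by omega) hg2.1 hg2.2 (he k₀).1 (he k₀).2
        have hw : (∃ w, s₁ k₀ ≤ w ∧ w ≤ s₁ k₀ + p k₀ ∧
              e k₀ / (p k₀ + 1) = w / (p k₀ + 1)) ∨
            (∃ w, s₂ k₀ ≤ w ∧ w ≤ s₂ k₀ + p k₀ ∧
              e k₀ / (p k₀ + 1) = w / (p k₀ + 1)) := by
          rcases le_total (s₁ k₀) (s₂ k₀) with h | h
          · rw [min_eq_left h, max_eq_right h] at htl; exact htl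
          · rw [min_eq_right h, max_eq_left h] at htl; exact htl.symm
        rcases hw with ⟨w, hw⟩ | ⟨w, hw⟩
        · refine cert s₁ hs₁ e (fun k => ?_)
          by_cases hk : k = k₀
          · subst hk; exact ⟨w, hw⟩
          · have h1 := (he k).1; have h2 := (he k).2
            rw [hg1 k hk] at h1 h2
            exact SCAux.dc_w (hDCM k hk).1 h1 h2
        · refine cert s₂ hs₂ e (fun k => ?_)
          by_cases hk : k = k₀
          · subst hk; exact ⟨w, hw⟩
          · have h1 := (he k).1; have h2 := (he k).2
            rw [hg1 k hk] at h1 h2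
            exact SCAux.dc_w (hDCM k hk).2 h1 h2
    · -- phase C vertex
      have hg : ∀ j, min (Function.update M k₀ (s₂ k₀) j) (s₂ j) ≤ r i j ∧
          r i j ≤ max (Function.update M k₀ (s₂ k₀) j) (s₂ j) := by
        intro j; rw [heq]; exact hvC i' j
      exact cert s₂ hs₂ e (fun k =>
        SCAux.dc_w (hDC3 k (r i k) (hg k).1 (hg k).2) (he k).1 (he k).2)
end
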